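/- arXiv:math/0211044 — 4 statements merged into one kernel-verified Lean document; each statement's English description precedes it below -/
import Mathlib

section
/- The ring homomorphism ℤ[q] → ℤ[[t]] sending q to 1 + t maps (q;q)_n into the ideal (t^n) for every n, and hence induces a ring homomorphism ι₁ : Ẑ[q]^ → ℤ[[t]] ≅ lim_n ℤ[t]/(t^n), characterized by the property that for every n the composite of ι₁ with reduction modulo t^n equals the composite of π_n with the induced map ℤ[q]/((q;q)_n) → ℤ[t]/(t^n). This homomorphism ι₁ is injective. -/
open Polynomial

/-- `(q;q)_n = ∏_{i=1}^n (q^i - 1)` in `ℤ[q]`. -/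
noncomputable def qPoch (n : ℕ) : Polynomial ℤ :=
  ∏ i ∈ Finset.range n, (X ^ (i + 1) - 1)

lemma qPoch_dvd_succ (n : ℕ) : qPoch n ∣ qPoch (n + 1) :=
  ⟨X ^ (n + 1) - 1, by rw [qPoch, qPoch, Finset.prod_range_succ]⟩

/-- The canonical projection `ℤ[q]/((q;q)_{n+1}) → ℤ[q]/((q;q)_n)`. -/
noncomputable def habiroTrans (n : ℕ) :
    (Polynomial ℤ ⧸ Ideal.span {qPoch (n + 1)}) →+* Polynomial ℤ ⧸ Ideal.span {qPoch n} :=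
  Ideal.Quotient.factor
    (Ideal.span_singleton_le_span_singleton.mpr (qPoch_dvd_succ n))

/-- The Habiro ring `lim_n ℤ[q]/((q;q)_n)`, realized as the subring of compatible
sequences in `∏_n ℤ[q]/((q;q)_n)`. -/
noncomputable def HabiroRing : Subring (∀ n : ℕ, Polynomial ℤ ⧸ Ideal.span {qPoch n}) where
  carrier := {x | ∀ n, habiroTrans n (x (n + 1)) = x n}
  mul_mem' {a b} ha hb n := by
    simp only [Pi.mul_apply, map_mul, ha n, hb n]
  one_mem' n := by simp only [Pi.one_apply, map_one]
  add_mem' {a b} ha hb n := by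
    simp only [Pi.add_apply, map_add, ha n, hb n]
  zero_mem' n := by simp only [Pi.zero_apply, map_zero]
  neg_mem' {a} ha n := by simp only [Pi.neg_apply, map_neg, ha n]

/-- The canonical map `η : ℤ[q] → Ẑ[q]^`. -/
noncomputable def habiroEta : Polynomial ℤ →+* HabiroRing :=
  RingHom.codRestrict (Pi.ringHom fun n => Ideal.Quotient.mk (Ideal.span {qPoch n}))
    HabiroRing (fun _ _ => Ideal.Quotient.factor_mk _ _)

/-- The projection `π_n : Ẑ[q]^ → ℤ[q]/((q;q)_n)`. -/
noncomputable def habiroPi (n : ℕ) : HabiroRing →+* Polynomial ℤ ⧸ Ideal.span {qPoch n} :=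
  (Pi.evalRingHom _ n).comp HabiroRing.subtype

/-- The evaluation `ℤ[q] → ℤ[[t]]`, `q ↦ 1 + t`. -/
noncomputable def evalOnePlusT : Polynomial ℤ →+* PowerSeries ℤ :=
  Polynomial.eval₂RingHom (Int.castRingHom (PowerSeries ℤ)) (1 + PowerSeries.X)

/-!
`ι₁` is the lift, to the `t`-adically complete ring `ℤ⟦t⟧`, of the maps
`ℤ[q]/((q;q)_n) → ℤ⟦t⟧/(t^n)`; these exist because `(q - 1)^n ∣ (q;q)_n`.

For injectivity, let `ι₁ x = 0` and let `f_n` represent the components of `x`, so that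
`(q - 1)^n ∣ f_n` and `(q;q)_m ∣ f_n - f_m` for `m ≤ n`. By strong induction on `d`,
`Φ_d^e ∣ f_N` whenever `d e ≤ N`; since `(q;q)_n ∣ ∏_{d ≤ n} Φ_d^n`, this gives `(q;q)_n ∣ f_n`.
For `d = d' p` with `p` prime, `Φ_{d'}^p ≡ Φ_{d'}(q^p) ≡ 0` modulo `(p, Φ_d)`. Writing
`f_N = Φ_d^e h`, comparison with `f_M` for large `M`, which is divisible by `Φ_{d'}^{p k}`,
shows that `h` is divisible by `p^k` in `ℤ[q]/(Φ_d)` for every `k`; as this is a free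
`ℤ`-module, `Φ_d ∣ h`.
-/

theorem Int.eq_zero_of_forall_pow_dvd {a n : ℤ} (ha : a.natAbs ≠ 1) (h : ∀ k, a ^ k ∣ n) :
    n = 0 := by
  by_contra hn
  obtain ⟨k, hk⟩ := Int.finiteMultiplicity_iff.mpr ⟨ha, hn⟩
  exact hk (h _)

theorem eq_zero_of_forall_intCast_pow_dvd {S : Type*} [CommRing S] [Module.Free ℤ S]
    {a : ℤ} (ha : a.natAbs ≠ 1) {y : S} (h : ∀ k, (a : S) ^ k ∣ y) : y = 0 := by
  let b := Module.Free.chooseBasis ℤ S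
  refine b.repr.injective (Finsupp.ext fun i => ?_)
  rw [map_zero, Finsupp.zero_apply]
  refine Int.eq_zero_of_forall_pow_dvd ha fun k => ?_
  obtain ⟨z, rfl⟩ := h k
  rw [← Int.cast_pow, ← zsmul_eq_mul, map_zsmul, Finsupp.smul_apply, smul_eq_mul]
  exact dvd_mul_right _ _

theorem Polynomial.natCast_dvd_pow_sub_expand (p : ℕ) [Fact p.Prime] (f : ℤ[X]) :
    (p : ℤ[X]) ∣ f ^ p - expand ℤ p f := by
  have hmap : (f ^ p - expand ℤ p f).map (Int.castRingHom (ZMod p)) = 0 := by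
    rw [Polynomial.map_sub, Polynomial.map_pow, map_expand, ZMod.expand_card, sub_self]
  rw [← map_natCast C, C_dvd_iff_dvd_coeff]
  exact fun i => (ZMod.intCast_zmod_eq_zero_iff_dvd _ p).mp
    (by simpa only [coeff_map, coeff_zero, eq_intCast] using congrArg (coeff · i) hmap)

theorem natCast_dvd_mk_cyclotomic_pow {p : ℕ} (hp : p.Prime) (d : ℕ) :
    (p : AdjoinRoot (cyclotomic (d * p) ℤ)) ∣ AdjoinRoot.mk _ (cyclotomic d ℤ ^ p) := by
  have := Fact.mk hp
  obtain ⟨c, hc⟩ := natCast_dvd_pow_sub_expand p (cyclotomic d ℤ)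
  have hexpand : cyclotomic (d * p) ℤ ∣ expand ℤ p (cyclotomic d ℤ) := by
    by_cases hpd : p ∣ d
    · rw [cyclotomic_expand_eq_cyclotomic hp hpd]
    · rw [cyclotomic_expand_eq_cyclotomic_mul hp hpd]
      exact dvd_mul_right _ _
  rw [sub_eq_iff_eq_add'.mp hc, map_add, AdjoinRoot.mk_eq_zero.mpr hexpand, zero_add, map_mul,
    map_natCast]
  exact dvd_mul_right _ _

theorem isRelPrime_cyclotomic {m n : ℕ} (hm : 0 < m) (hn : 0 < n) (hmn : m ≠ n) :
    IsRelPrime (cyclotomic m ℤ) (cyclotomic n ℤ) := by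
  refine (cyclotomic.irreducible hm).isRelPrime_iff_not_dvd.mpr fun h => hmn ?_
  exact cyclotomic_injective (eq_of_monic_of_associated (cyclotomic.monic _ _)
    (cyclotomic.monic _ _) ((cyclotomic.irreducible hm).associated_of_dvd
      (cyclotomic.irreducible hn) h))

theorem cyclotomic_mul_prime_dvd_of_forall_pow_dvd_add {p d : ℕ} (hp : p.Prime) {h : ℤ[X]}
    (H : ∀ k, ∃ g, cyclotomic d ℤ ^ (p * k) ∣ h + cyclotomic (d * p) ℤ * g) :
    cyclotomic (d * p) ℤ ∣ h := by
  have := (cyclotomic.monic (d * p) ℤ).free_adjoinRoot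
  let π := AdjoinRoot.mk (cyclotomic (d * p) ℤ)
  rw [← AdjoinRoot.mk_eq_zero]
  refine eq_zero_of_forall_intCast_pow_dvd (a := p) (by simpa using hp.ne_one) fun k => ?_
  obtain ⟨g, w, hw⟩ := H k
  have hπ : π h = π (cyclotomic d ℤ ^ p) ^ k * π w := by
    rw [← map_pow, ← map_mul, ← pow_mul, ← hw, map_add, map_mul, AdjoinRoot.mk_self, zero_mul,
      add_zero]
  rw [hπ, Int.cast_natCast]
  exact (pow_dvd_pow_of_dvd (natCast_dvd_mk_cyclotomic_pow hp d) k).mul_right _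

theorem qPoch_succ (n : ℕ) : qPoch (n + 1) = qPoch n * (X ^ (n + 1) - 1) :=
  Finset.prod_range_succ _ n

theorem qPoch_dvd_qPoch {m n : ℕ} (h : m ≤ n) : qPoch m ∣ qPoch n :=
  Finset.prod_dvd_prod_of_subset _ _ _ (Finset.range_subset_range.mpr h)

theorem cyclotomic_pow_dvd_qPoch {d e n : ℕ} (hd : 0 < d) (h : d * e ≤ n) :
    cyclotomic d ℤ ^ e ∣ qPoch n := by
  induction e generalizing n with
  | zero => simp
  | succ e ih =>
    obtain ⟨m, hm⟩ := Nat.exists_eq_add_one_of_ne_zero (by positivity : d * (e + 1) ≠ 0)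
    refine dvd_trans ?_ (qPoch_dvd_qPoch (hm ▸ h))
    rw [qPoch_succ, pow_succ]
    refine mul_dvd_mul (ih (by rw [Nat.mul_succ] at hm; omega)) ?_
    refine (cyclotomic.dvd_X_pow_sub_one d ℤ).trans ?_
    simpa [← hm, pow_mul] using sub_dvd_pow_sub_pow (X ^ d : ℤ[X]) 1 (e + 1)

theorem X_sub_one_pow_dvd_qPoch (n : ℕ) : (X - 1 : ℤ[X]) ^ n ∣ qPoch n := by
  simpa using cyclotomic_pow_dvd_qPoch (d := 1) (e := n) one_pos le_rfl

theorem qPoch_dvd_prod_cyclotomic_pow (n : ℕ) :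
    qPoch n ∣ ∏ d ∈ Finset.Icc 1 n, cyclotomic d ℤ ^ n := by
  rw [Finset.prod_pow, Finset.pow_eq_prod_const, qPoch]
  refine Finset.prod_dvd_prod_of_dvd _ _ fun i hi => ?_
  rw [← prod_cyclotomic_eq_X_pow_sub_one i.succ_pos]
  refine Finset.prod_dvd_prod_of_subset _ _ _ fun d hd => Finset.mem_Icc.mpr ⟨?_, ?_⟩
  · exact Nat.pos_of_mem_divisors hd
  · exact (Nat.divisor_le hd).trans (Finset.mem_range.mp hi)

theorem cyclotomic_pow_dvd_of_compatible {f : ℕ → ℤ[X]} (hX : ∀ n, (X - 1 : ℤ[X]) ^ n ∣ f n)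
    (hcompat : ∀ {m n}, m ≤ n → qPoch m ∣ f n - f m) {d e N : ℕ} (hd : 0 < d) (hN : d * e ≤ N) :
    cyclotomic d ℤ ^ e ∣ f N := by
  induction d using Nat.strong_induction_on generalizing e N with | _ d ih =>
  rcases eq_or_ne d 1 with rfl | hd1
  · rw [cyclotomic_one]
    exact (pow_dvd_pow _ (by omega)).trans (hX N)
  obtain ⟨p, d', hp, rfl⟩ : ∃ p d', p.Prime ∧ d = d' * p :=
    ⟨d.minFac, d / d.minFac, Nat.minFac_prime hd1, (Nat.div_mul_cancel (Nat.minFac_dvd d)).symm⟩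
  have hd' : 0 < d' := Nat.pos_of_mul_pos_right hd
  have hd'lt : d' < d' * p := lt_mul_of_one_lt_right hd' hp.one_lt
  induction e generalizing N with
  | zero => simp
  | succ e ihe =>
    obtain ⟨h, hh⟩ := ihe (N := N) (le_trans (Nat.mul_le_mul_left _ e.le_succ) hN)
    rw [hh, pow_succ]
    refine mul_dvd_mul_left _ (cyclotomic_mul_prime_dvd_of_forall_pow_dvd_add hp fun k => ?_)
    set M := max N (d' * (p * k))
    obtain ⟨g, hg⟩ : cyclotomic (d' * p) ℤ ^ (e + 1) ∣ f M - f N :=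
      (cyclotomic_pow_dvd_qPoch hd hN).trans (hcompat (le_max_left _ _))
    have hfM : f M = cyclotomic (d' * p) ℤ ^ e * (h + cyclotomic (d' * p) ℤ * g) := by
      rw [sub_eq_iff_eq_add.mp hg, hh]
      ring
    refine ⟨g, (isRelPrime_cyclotomic hd' hd hd'lt.ne).pow.dvd_of_dvd_mul_left (y := _ ^ e) ?_⟩
    exact hfM ▸ ih d' hd'lt hd' (le_max_right _ _)

theorem qPoch_dvd_of_compatible {f : ℕ → ℤ[X]} (hX : ∀ n, (X - 1 : ℤ[X]) ^ n ∣ f n)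
    (hcompat : ∀ {m n}, m ≤ n → qPoch m ∣ f n - f m) (n : ℕ) : qPoch n ∣ f n := by
  have hprod : ∏ d ∈ Finset.Icc 1 n, cyclotomic d ℤ ^ n ∣ f (n * n) := by
    refine Finset.prod_dvd_of_isRelPrime (fun a ha b hb hab => ?_) fun d hd => ?_
    · exact (isRelPrime_cyclotomic (Finset.mem_Icc.mp ha).1 (Finset.mem_Icc.mp hb).1 hab).pow
    · have hd := Finset.mem_Icc.mp hd
      exact cyclotomic_pow_dvd_of_compatible hX hcompat hd.1 (Nat.mul_le_mul_right n hd.2)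
  rw [← sub_sub_cancel (f (n * n)) (f n)]
  exact dvd_sub ((qPoch_dvd_prod_cyclotomic_pow n).trans hprod) (hcompat (Nat.le_mul_self n))

theorem evalOnePlusT_eq_coe_taylor (f : ℤ[X]) : evalOnePlusT f = (taylor 1 f : PowerSeries ℤ) := by
  have : evalOnePlusT = (coeToPowerSeries.ringHom : ℤ[X] →+* PowerSeries ℤ).comp
      (taylorAlgHom (1 : ℤ)).toRingHom := by
    refine ringHom_ext (fun a => ?_) ?_ <;> simp [evalOnePlusT, add_comm]
  rw [this]
  rfl

theorem X_sub_one_pow_dvd_iff_evalOnePlusT_mem {f : ℤ[X]} {n : ℕ} :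
    (X - 1 : ℤ[X]) ^ n ∣ f ↔ evalOnePlusT f ∈ Ideal.span {(PowerSeries.X : PowerSeries ℤ) ^ n} := by
  rw [Ideal.mem_span_singleton, evalOnePlusT_eq_coe_taylor, PowerSeries.X_pow_dvd_iff,
    ← map_dvd_iff (taylorEquiv (1 : ℤ)), map_pow, map_sub, map_one]
  change (taylor 1 X - 1) ^ n ∣ taylor 1 f ↔ _
  simp only [taylor_X, map_one, add_sub_cancel_right, Polynomial.X_pow_dvd_iff, coeff_coe]

theorem evalOnePlusT_qPoch_mem (n : ℕ) :
    evalOnePlusT (qPoch n) ∈ Ideal.span {(PowerSeries.X : PowerSeries ℤ) ^ n} :=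
  X_sub_one_pow_dvd_iff_evalOnePlusT_mem.mp (X_sub_one_pow_dvd_qPoch n)

theorem habiroPi_eq_mk_of_le {x : HabiroRing} {m n : ℕ} (hmn : m ≤ n) {f : ℤ[X]}
    (hf : habiroPi n x = Ideal.Quotient.mk _ f) : habiroPi m x = Ideal.Quotient.mk _ f := by
  induction n, hmn using Nat.le_induction with
  | base => exact hf
  | succ n _ ih =>
    refine ih ((x.2 n).symm.trans ?_)
    change habiroTrans n (habiroPi (n + 1) x) = _
    rw [hf, habiroTrans, Ideal.Quotient.factor_mk]

noncomputable def iotaOneMod (n : ℕ) :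
    HabiroRing →+* PowerSeries ℤ ⧸ Ideal.span {(PowerSeries.X : PowerSeries ℤ)} ^ n :=
  (Ideal.quotientMap _ evalOnePlusT <| Ideal.span_le.mpr <| Set.singleton_subset_iff.mpr <| by
    simpa [Ideal.span_singleton_pow] using evalOnePlusT_qPoch_mem n).comp (habiroPi n)

theorem iotaOneMod_eq_mk {n : ℕ} {x : HabiroRing} {f : ℤ[X]}
    (hf : habiroPi n x = Ideal.Quotient.mk _ f) :
    iotaOneMod n x = Ideal.Quotient.mk _ (evalOnePlusT f) := by
  rw [iotaOneMod, RingHom.comp_apply, hf, Ideal.quotientMap_mk]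

theorem factorPow_comp_iotaOneMod {m n : ℕ} (hmn : m ≤ n) :
    (Ideal.Quotient.factorPow _ hmn).comp (iotaOneMod n) = iotaOneMod m := by
  ext x
  obtain ⟨f, hf⟩ := Ideal.Quotient.mk_surjective (habiroPi n x)
  rw [RingHom.comp_apply, iotaOneMod_eq_mk hf.symm, iotaOneMod_eq_mk
    (habiroPi_eq_mk_of_le hmn hf.symm), Ideal.Quotient.factor_mk]

noncomputable def iotaOne : HabiroRing →+* PowerSeries ℤ :=
  IsAdicComplete.liftRingHom (Ideal.span {PowerSeries.X}) iotaOneMod factorPow_comp_iotaOneMod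

theorem iotaOne_sub_mem {n : ℕ} {x : HabiroRing} {f : ℤ[X]}
    (hf : habiroPi n x = Ideal.Quotient.mk _ f) :
    iotaOne x - evalOnePlusT f ∈ Ideal.span {(PowerSeries.X : PowerSeries ℤ) ^ n} := by
  rw [← Ideal.span_singleton_pow, ← Ideal.Quotient.eq, iotaOne, IsAdicComplete.mk_liftRingHom,
    iotaOneMod_eq_mk hf]

theorem eq_iotaOne (ι : HabiroRing →+* PowerSeries ℤ)
    (hι : ∀ (n : ℕ) (x : HabiroRing) (f : ℤ[X]), habiroPi n x = Ideal.Quotient.mk _ f →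
      ι x - evalOnePlusT f ∈ Ideal.span {(PowerSeries.X : PowerSeries ℤ) ^ n}) :
    ι = iotaOne := by
  refine IsAdicComplete.eq_liftRingHom _ _ _ ι fun n => RingHom.ext fun x => ?_
  obtain ⟨f, hf⟩ := Ideal.Quotient.mk_surjective (habiroPi n x)
  rw [RingHom.comp_apply, iotaOneMod_eq_mk hf.symm, Ideal.Quotient.eq, Ideal.span_singleton_pow]
  exact hι n x f hf.symm

theorem iotaOne_injective : Function.Injective iotaOne := by
  refine (injective_iff_map_eq_zero _).mpr fun x hx => ?_
  choose f hf using fun n => Ideal.Quotient.mk_surjective (habiroPi n x)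
  have hX (n : ℕ) : (X - 1 : ℤ[X]) ^ n ∣ f n :=
    X_sub_one_pow_dvd_iff_evalOnePlusT_mem.mpr (by simpa [hx] using iotaOne_sub_mem (hf n).symm)
  have hcompat {m n : ℕ} (hmn : m ≤ n) : qPoch m ∣ f n - f m := by
    rw [← Ideal.mem_span_singleton, ← Ideal.Quotient.eq, ← habiroPi_eq_mk_of_le hmn (hf n).symm,
      hf m]
  refine Subtype.ext (funext fun n => ?_)
  change habiroPi n x = 0
  rw [← hf n, Ideal.Quotient.eq_zero_iff_mem, Ideal.mem_span_singleton]
  exact qPoch_dvd_of_compatible hX hcompat n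

/-- The homomorphism `ℤ[q] → ℤ[[t]]`, `q ↦ 1 + t`, maps `(q;q)_n` into
`(t^n)` for every `n`; hence it induces a ring homomorphism `ι₁ : Ẑ[q]^ → ℤ[[t]]`,
characterized by compatibility with the projections `π_n` modulo `t^n`; and `ι₁` is
injective. -/
theorem habiro_iota_one_injective :
    (∀ n : ℕ, evalOnePlusT (qPoch n) ∈ Ideal.span {(PowerSeries.X : PowerSeries ℤ) ^ n}) ∧
    ∃ ι₁ : HabiroRing →+* PowerSeries ℤ,
      (∀ (n : ℕ) (x : HabiroRing) (f : Polynomial ℤ),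
        habiroPi n x = Ideal.Quotient.mk (Ideal.span {qPoch n}) f →
        ι₁ x - evalOnePlusT f ∈ Ideal.span {(PowerSeries.X : PowerSeries ℤ) ^ n}) ∧
      Function.Injective ι₁ ∧
      (∀ ι' : HabiroRing →+* PowerSeries ℤ,
        (∀ (n : ℕ) (x : HabiroRing) (f : Polynomial ℤ),
          habiroPi n x = Ideal.Quotient.mk (Ideal.span {qPoch n}) f →
          ι' x - evalOnePlusT f ∈ Ideal.span {(PowerSeries.X : PowerSeries ℤ) ^ n}) →
        ι' = ι₁) :=
  ⟨evalOnePlusT_qPoch_mem, iotaOne, fun _ _ _ => iotaOne_sub_mem, iotaOne_injective, eq_iotaOne⟩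
end

section
/- For integers i ≥ j ≥ 0 define τ_{i,j} = Σ_{1 ≤ p_1 < ⋯ < p_j ≤ i} ∏_{r=1}^{j} (q^{p_r} + q^{−p_r} − 2) ∈ ℤ[q,q^{−1}] (this equals Σ_{1 ≤ p_1 < ⋯ < p_j ≤ i} ∏_{r=1}^{j} (v^{p_r} − v^{−p_r})² with q = v²). Then for all integers k ≥ 0 and n ≥ 0 there exists N such that for all i ≥ N, the element ∏_{s=1}^{n} (q^s − 1) divides τ_{i, i−k} in ℤ[q,q^{−1}]. -/
/-!
Each summand of `τ_{i,i-k}` is a product over a set `s ⊆ [1, i]` missing only `k` points, and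
`q^p - 1` divides the factor `q^p + q^{-p} - 2 = (q^p - 1)(1 - q^{-p})`. Once `i ≥ (k + 1) n`, the
set `s` contains a block `[m + 1, m + n]` of `n` consecutive integers, and
`∏_{s=1}^n (q^s - 1)` divides `∏_{p=m+1}^{m+n} (q^p - 1)` because their quotient is the Gaussian
binomial coefficient `[m+n choose n]_q`.
-/

open LaurentPolynomial

/-- `τ_{i,j} = Σ_{1 ≤ p₁ < ⋯ < p_j ≤ i} ∏_{r=1}^j (q^{p_r} + q^{−p_r} − 2) ∈ ℤ[q,q^{−1}]`. -/
noncomputable def tauLP (i j : ℕ) : LaurentPolynomial ℤ :=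
  ∑ s ∈ Finset.powersetCard j (Finset.Icc 1 i),
    ∏ p ∈ s, (T (p : ℤ) + T (-(p : ℤ)) - 2)

open Finset

section QAnalog

variable {R : Type*} [CommRing R] (x : R)

/- Integrality of the Gaussian binomial, by induction along the `x`-Pascal rule
`x^{m+n+2} - 1 = x^{n+1} (x^{m+1} - 1) + (x^{n+1} - 1)`. -/
theorem prod_range_pow_succ_sub_one_dvd (m n : ℕ) :
    ∏ j ∈ range n, (x ^ (j + 1) - 1) ∣ ∏ j ∈ range n, (x ^ (m + j + 1) - 1) := by
  induction m generalizing n with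
  | zero => simp
  | succ m ihm =>
    induction n with
    | zero => simp
    | succ n ihn =>
      have pascal : ∏ j ∈ range (n + 1), (x ^ (m + 1 + j + 1) - 1) =
          (x ^ (n + 1) - 1) * ∏ j ∈ range n, (x ^ (m + 1 + j + 1) - 1) +
            x ^ (n + 1) * ∏ j ∈ range (n + 1), (x ^ (m + j + 1) - 1) := by
        rw [prod_range_succ, prod_range_succ' (fun j ↦ x ^ (m + j + 1) - 1)]
        simp only [show ∀ j, m + (j + 1) + 1 = m + 1 + j + 1 by omega]
        ring
      rw [pascal]
      refine dvd_add ?_ ((ihm (n + 1)).mul_left _)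
      rw [prod_range_succ, mul_comm]
      exact mul_dvd_mul_left _ ihn

theorem prod_Icc_add_eq_prod_range {M : Type*} [CommMonoid M] (f : ℕ → M) (m n : ℕ) :
    ∏ p ∈ Icc (m + 1) (m + n), f p = ∏ j ∈ range n, f (m + j + 1) := by
  rw [← Ico_add_one_right_eq_Icc, prod_Ico_eq_prod_range, show m + n + 1 - (m + 1) = n by omega]
  simp only [add_right_comm]

theorem prod_Icc_pow_sub_one_dvd (m n : ℕ) :
    ∏ p ∈ Icc 1 n, (x ^ p - 1) ∣ ∏ p ∈ Icc (m + 1) (m + n), (x ^ p - 1) := by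
  rw [show Icc 1 n = Icc (0 + 1) (0 + n) by simp, prod_Icc_add_eq_prod_range,
    prod_Icc_add_eq_prod_range]
  simpa using prod_range_pow_succ_sub_one_dvd x m n

end QAnalog

/- The `k + 1` disjoint blocks `(t n, t n + n]`, `t ≤ k`, of `[1, i]` cannot all meet the at most
`k` points of `[1, i]` missing from `s`. -/
theorem exists_Icc_subset_of_card_add_le {s : Finset ℕ} {i k n : ℕ} (hs : s ⊆ Icc 1 i)
    (hcard : i ≤ #s + k) (hi : (k + 1) * n ≤ i) : ∃ m, Icc (m + 1) (m + n) ⊆ s := by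
  have hgaps : #(Icc 1 i \ s) ≤ k := by
    rw [card_sdiff_of_subset hs, Nat.card_Icc]; omega
  obtain ⟨t, ht, hfree⟩ := exists_mem_notMem_of_card_lt_card
    (s := (Icc 1 i \ s).image fun p ↦ (p - 1) / n) (t := range (k + 1))
    (by rw [card_range]; exact Nat.lt_succ_of_le (card_image_le.trans hgaps))
  refine ⟨t * n, fun p hp ↦ ?_⟩
  rw [mem_Icc] at hp
  have hblock : (t + 1) * n ≤ (k + 1) * n := Nat.mul_le_mul_right n (by simpa using ht)
  by_contra hps
  refine hfree (mem_image.mpr ⟨p, mem_sdiff.mpr ⟨mem_Icc.mpr ⟨by omega, by linarith⟩, hps⟩, ?_⟩)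
  exact Nat.div_eq_of_lt_le (by omega) (by rw [add_mul]; omega)

theorem LaurentPolynomial.T_sub_one_dvd_T_add_T_neg_sub_two {R : Type*} [CommRing R] (p : ℤ) :
    (T p - 1 : R[T;T⁻¹]) ∣ T p + T (-p) - 2 := by
  have hinv : (T p * T (-p) : R[T;T⁻¹]) = 1 := by rw [← T_add, add_neg_cancel, T_zero]
  exact ⟨1 - T (-p), by linear_combination hinv⟩

/-- For all `k, n ≥ 0` there exists `N` such that for all `i ≥ N`,
`∏_{s=1}^n (q^s − 1)` divides `τ_{i,i−k}` in `ℤ[q,q^{−1}]`. -/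
theorem qfactorial_dvd_tau (k n : ℕ) :
    ∃ N : ℕ, ∀ i : ℕ, N ≤ i →
      (∏ s ∈ Finset.Icc 1 n, (T (s : ℤ) - 1)) ∣ tauLP i (i - k) := by
  have hT (p : ℕ) : (T (p : ℤ) : LaurentPolynomial ℤ) = T 1 ^ p := by simp [T_pow]
  refine ⟨(k + 1) * n, fun i hi ↦ dvd_sum fun s hs ↦ ?_⟩
  obtain ⟨hsub, hcard⟩ := mem_powersetCard.mp hs
  obtain ⟨m, hblock⟩ := exists_Icc_subset_of_card_add_le hsub (by omega) hi
  calc ∏ p ∈ Icc 1 n, (T (p : ℤ) - 1 : LaurentPolynomial ℤ)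
      ∣ ∏ p ∈ Icc (m + 1) (m + n), (T (p : ℤ) - 1) := by
        simpa only [hT] using prod_Icc_pow_sub_one_dvd (T 1 : LaurentPolynomial ℤ) m n
    _ ∣ ∏ p ∈ s, (T (p : ℤ) - 1) := prod_dvd_prod_of_subset _ _ _ hblock
    _ ∣ ∏ p ∈ s, (T (p : ℤ) + T (-(p : ℤ)) - 2) :=
        prod_dvd_prod_of_dvd _ _ fun p _ ↦ T_sub_one_dvd_T_add_T_neg_sub_two _
end

section
/- The ℤ[v,v^{−1}]-submodule of ℚ(v)[x] spanned by {P′_n : n ≥ 0} is closed under multiplication: for all m, n ≥ 0 the product P′_m · P′_n is a ℤ[v,v^{−1}]-linear combination of finitely many P′_k. Consequently, this span equals the ℤ[v,v^{−1}]-subalgebra 𝓡 of ℚ(v)[x] generated by the elements P′_n, n ≥ 1, and 𝓡 is a free ℤ[v,v^{−1}]-module with basis {P′_n : n ≥ 0}. -/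
/-- The quantum integer `[n] = (v^n − v^{−n})/(v − v^{−1})` in `ℚ(v)`. -/
noncomputable def qInt (n : ℕ) : RatFunc ℚ :=
  (RatFunc.X ^ n - (RatFunc.X)⁻¹ ^ n) / (RatFunc.X - (RatFunc.X)⁻¹)

/-- The quantum factorial `[n]! = [1][2]⋯[n]` in `ℚ(v)`. -/
noncomputable def qFact (n : ℕ) : RatFunc ℚ :=
  ∏ i ∈ Finset.Icc 1 n, qInt i

/-- `P_n = ∏_{i=0}^{n−1} (x − v^{2i+1} − v^{−2i−1})` in `ℚ(v)[x]`. -/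
noncomputable def Pbasis (n : ℕ) : Polynomial (RatFunc ℚ) :=
  ∏ i ∈ Finset.range n,
    (Polynomial.X - Polynomial.C (RatFunc.X ^ (2 * i + 1) + (RatFunc.X)⁻¹ ^ (2 * i + 1)))

/-- `P′_n = P_n / ((v − v^{−1})^n [n]!)` in `ℚ(v)[x]`. -/
noncomputable def Pbasis' (n : ℕ) : Polynomial (RatFunc ℚ) :=
  Polynomial.C (((RatFunc.X - (RatFunc.X)⁻¹) ^ n * qFact n)⁻¹) * Pbasis n

/-- The copy of `ℤ[v,v^{−1}]` inside `ℚ(v)`, namely the subring generated by `v`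
and `v^{−1}`. -/
noncomputable def ZLaurent : Subring (RatFunc ℚ) :=
  Subring.closure {RatFunc.X, (RatFunc.X)⁻¹}

/-- `inSpanP' S f` says that `f ∈ ℚ(v)[x]` is a `ℤ[v,v^{−1}]`-linear combination of
finitely many of the `P′_k` with `k ∈ S`. -/
noncomputable def inSpanP' (S : Set ℕ) (f : Polynomial (RatFunc ℚ)) : Prop :=
  ∃ (s : Finset ℕ) (c : ℕ → ZLaurent), ↑s ⊆ S ∧
    f = ∑ k ∈ s, Polynomial.C ((c k : RatFunc ℚ)) * Pbasis' k

/-- The `ℤ[v,v^{−1}]`-subalgebra `𝓡` of `ℚ(v)[x]` generated by the `P′_n`, `n ≥ 1`,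
realized as the subring generated by the constants `ℤ[v,v^{−1}]` together with the
`P′_n`, `n ≥ 1`. -/
noncomputable def Ralg : Subring (Polynomial (RatFunc ℚ)) :=
  Subring.closure
    ((Polynomial.C '' (ZLaurent : Set (RatFunc ℚ))) ∪ {f | ∃ n : ℕ, 1 ≤ n ∧ f = Pbasis' n})

/-!
Write `a_k = v^{2k+1} + v^{-2k-1}` for the roots of the `P_n`. Multiplication by `x - a_m` raises
the index: `(x - a_m) P′_k = (v - v⁻¹)[k+1] P′_{k+1} + (a_k - a_m) P′_k`, and
`a_k - a_m = (v - v⁻¹)²[k-m][k+m+1]`. Induction on `m` then gives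
`P′_m P′_n = ∑_i (v - v⁻¹)^i [m+n]! / ([m-i]! [n-i]! [i]!) P′_{m+n-i}`, where the recurrence for
the coefficients reduces to `[a][b] = [a-j][b-j] + [j][a+b-j]`. Each coefficient is `(v - v⁻¹)^i`
times a quantum falling factorial times two Gaussian binomials, so it lies in `ℤ[v,v⁻¹]`. Hence the
span is a subring containing the generators of `𝓡` and contained in `𝓡`. Freeness holds because
`deg P′_n = n`.
-/

open Polynomial Finset

local notation "v" => (RatFunc.X : RatFunc ℚ)
local notation "δ" => (RatFunc.X - (RatFunc.X)⁻¹ : RatFunc ℚ)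

namespace RatFunc

variable {K : Type*} [Field K]

lemma X_pow_ne_one {n : ℕ} (hn : 0 < n) : (X : RatFunc K) ^ n ≠ 1 :=
  fun h => transcendental_X.pow hn (h ▸ isAlgebraic_one)

lemma X_pow_sub_X_inv_pow_ne_zero {n : ℕ} (hn : 0 < n) : (X : RatFunc K) ^ n - X⁻¹ ^ n ≠ 0 := by
  intro h
  apply X_pow_ne_one (K := K) (show 0 < 2 * n by omega)
  have hX : (X * X⁻¹ : RatFunc K) ^ n = 1 := by simp [X_ne_zero]
  linear_combination X ^ n * h + hX

lemma X_sub_X_inv_ne_zero : (X : RatFunc K) - X⁻¹ ≠ 0 := by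
  simpa using X_pow_sub_X_inv_pow_ne_zero (K := K) one_pos

end RatFunc

lemma qInt_zero : qInt 0 = 0 := by simp [qInt]

lemma qInt_ne_zero {n : ℕ} (hn : 0 < n) : qInt n ≠ 0 :=
  div_ne_zero (RatFunc.X_pow_sub_X_inv_pow_ne_zero hn) RatFunc.X_sub_X_inv_ne_zero

lemma qInt_succ_ne_zero (n : ℕ) : qInt (n + 1) ≠ 0 := qInt_ne_zero n.succ_pos

lemma qInt_add (a b : ℕ) : qInt (a + b) = v ^ b * qInt a + v⁻¹ ^ a * qInt b := by
  simp only [qInt]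
  field_simp
  ring

lemma qInt_mul_qInt (j p s : ℕ) :
    qInt (j + p) * qInt (j + s) = qInt p * qInt s + qInt j * qInt (j + p + s) := by
  have hδ := RatFunc.X_sub_X_inv_ne_zero (K := ℚ)
  have hvu : (v * v⁻¹) ^ j = 1 := by simp [RatFunc.X_ne_zero]
  simp only [qInt]
  generalize v⁻¹ = u at *
  field_simp
  linear_combination (u ^ (p + s) + v ^ (p + s) - v ^ p * u ^ s - u ^ p * v ^ s) * hvu

lemma X_mem_ZLaurent : v ∈ ZLaurent := Subring.subset_closure (by simp)

lemma X_inv_mem_ZLaurent : v⁻¹ ∈ ZLaurent := Subring.subset_closure (by simp)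

lemma X_sub_X_inv_mem_ZLaurent : δ ∈ ZLaurent := sub_mem X_mem_ZLaurent X_inv_mem_ZLaurent

lemma qInt_mem_ZLaurent (n : ℕ) : qInt n ∈ ZLaurent := by
  induction n with
  | zero => simp [qInt_zero]
  | succ n ih =>
    have hone : qInt 1 = 1 := by
      simp only [qInt, pow_one]
      exact div_self RatFunc.X_sub_X_inv_ne_zero
    rw [qInt_add, hone, mul_one]
    exact add_mem (mul_mem (pow_mem X_mem_ZLaurent 1) ih) (pow_mem X_inv_mem_ZLaurent n)

lemma qFact_succ (n : ℕ) : qFact (n + 1) = qFact n * qInt (n + 1) :=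
  prod_Icc_succ_top (by omega) _

lemma qFact_ne_zero (n : ℕ) : qFact n ≠ 0 :=
  prod_ne_zero_iff.2 fun _ hi => qInt_ne_zero (mem_Icc.1 hi).1

/-- `[m][m-1]⋯[m-i+1]`; the truncated subtraction makes it vanish for `i > m`, since `[0] = 0`. -/
noncomputable def qDescFact (m i : ℕ) : RatFunc ℚ := ∏ t ∈ range i, qInt (m - t)

lemma qDescFact_zero_right (m : ℕ) : qDescFact m 0 = 1 := prod_range_zero _

lemma qDescFact_succ_right (m i : ℕ) : qDescFact m (i + 1) = qDescFact m i * qInt (m - i) :=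
  prod_range_succ _ _

lemma qDescFact_succ_succ (m i : ℕ) :
    qDescFact (m + 1) (i + 1) = qInt (m + 1) * qDescFact m i := by
  rw [qDescFact, prod_range_succ', mul_comm]
  simp [qDescFact]

lemma qDescFact_self (n : ℕ) : qDescFact n n = qFact n := by
  induction n with
  | zero => simp [qDescFact_zero_right, qFact]
  | succ n ih => rw [qDescFact_succ_succ, ih, qFact_succ, mul_comm]

lemma qDescFact_eq_zero_of_lt {m i : ℕ} (h : m < i) : qDescFact m i = 0 :=
  prod_eq_zero (mem_range.2 h) (by simp [qInt_zero])

lemma qDescFact_mem_ZLaurent (m i : ℕ) : qDescFact m i ∈ ZLaurent :=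
  prod_mem fun _ _ => qInt_mem_ZLaurent _

noncomputable def qChoose (n k : ℕ) : RatFunc ℚ := qDescFact n k / qFact k

lemma qChoose_zero_right (n : ℕ) : qChoose n 0 = 1 := by
  simp [qChoose, qDescFact_zero_right, qFact]

lemma qChoose_self (n : ℕ) : qChoose n n = 1 := by
  rw [qChoose, qDescFact_self, div_self (qFact_ne_zero n)]

lemma qChoose_eq_zero_of_lt {n k : ℕ} (h : n < k) : qChoose n k = 0 := by
  rw [qChoose, qDescFact_eq_zero_of_lt h, zero_div]

lemma qChoose_succ_succ (n k : ℕ) :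
    qChoose (n + 1) (k + 1) = v ^ (k + 1) * qChoose n (k + 1) + v⁻¹ ^ (n - k) * qChoose n k := by
  rcases lt_or_ge n k with h | h
  · rw [qChoose_eq_zero_of_lt h, qChoose_eq_zero_of_lt (by omega : n < k + 1),
      qChoose_eq_zero_of_lt (by omega : n + 1 < k + 1)]
    simp
  obtain ⟨d, rfl⟩ := Nat.exists_eq_add_of_le h
  have hk := qInt_succ_ne_zero k
  have hF := qFact_ne_zero k
  rw [qChoose, qChoose, qChoose, qDescFact_succ_succ, qDescFact_succ_right, qFact_succ,
    Nat.add_sub_cancel_left, show k + d + 1 = d + (k + 1) by ring, qInt_add d (k + 1)]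
  field_simp

lemma qChoose_mem_ZLaurent (n k : ℕ) : qChoose n k ∈ ZLaurent := by
  induction n generalizing k with
  | zero =>
    rcases k with _ | k
    · simp [qChoose_zero_right]
    · simp [qChoose_eq_zero_of_lt k.succ_pos]
  | succ n ih =>
    rcases k with _ | k
    · simp [qChoose_zero_right]
    · rw [qChoose_succ_succ]
      exact add_mem (mul_mem (pow_mem X_mem_ZLaurent _) (ih _))
        (mul_mem (pow_mem X_inv_mem_ZLaurent _) (ih _))

lemma qChoose_succ_mul_qInt (n k : ℕ) :
    qChoose n (k + 1) * qInt (k + 1) = qChoose n k * qInt (n - k) := by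
  have := qInt_succ_ne_zero k
  have := qFact_ne_zero k
  rw [qChoose, qChoose, qDescFact_succ_right, qFact_succ]
  field_simp

lemma qChoose_add_mul_qInt (m n : ℕ) :
    qChoose (m + 1 + n) n * qInt (m + 1) = qChoose (m + n) n * qInt (m + n + 1) := by
  have key :
      qDescFact (m + n + 1) n * qInt (m + 1) = qInt (m + n + 1) * qDescFact (m + n) n := by
    rw [← qDescFact_succ_succ, qDescFact_succ_right, show m + n + 1 - n = m + 1 by omega]
  rw [qChoose, qChoose, show m + 1 + n = m + n + 1 by ring, div_mul_eq_mul_div, key]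
  ring

noncomputable def PbasisRoot (i : ℕ) : RatFunc ℚ := v ^ (2 * i + 1) + v⁻¹ ^ (2 * i + 1)

lemma PbasisRoot_add_sub (M d : ℕ) :
    PbasisRoot (M + d) - PbasisRoot M = δ ^ 2 * qInt d * qInt (2 * M + d + 1) := by
  have hδ := RatFunc.X_sub_X_inv_ne_zero (K := ℚ)
  have hvu : (v * v⁻¹) ^ d = 1 := by simp [RatFunc.X_ne_zero]
  simp only [PbasisRoot, qInt]
  generalize v⁻¹ = u at *
  field_simp
  linear_combination (u ^ (2 * M + 1) + v ^ (2 * M + 1)) * hvu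

lemma Pbasis_succ (n : ℕ) : Pbasis (n + 1) = Pbasis n * (X - C (PbasisRoot n)) :=
  prod_range_succ _ _

lemma Pbasis_monic (n : ℕ) : (Pbasis n).Monic :=
  monic_prod_of_monic _ _ fun _ _ => monic_X_sub_C _

lemma Pbasis_natDegree (n : ℕ) : (Pbasis n).natDegree = n := by
  rw [Pbasis, natDegree_prod_of_monic _ _ fun _ _ => monic_X_sub_C _]
  simp only [natDegree_X_sub_C, sum_const, card_range, smul_eq_mul, mul_one]

lemma Pbasis'_zero : Pbasis' 0 = 1 := by
  simp [Pbasis', Pbasis, qFact]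

lemma Pbasis'_degree (n : ℕ) : (Pbasis' n).degree = n := by
  have hc : δ ^ n * qFact n ≠ 0 :=
    mul_ne_zero (pow_ne_zero _ RatFunc.X_sub_X_inv_ne_zero) (qFact_ne_zero n)
  rw [Pbasis', degree_C_mul (inv_ne_zero hc), degree_eq_natDegree (Pbasis_monic n).ne_zero,
    Pbasis_natDegree]

lemma X_sub_C_PbasisRoot_mul_Pbasis'_self (m : ℕ) :
    (X - C (PbasisRoot m)) * Pbasis' m = C (δ * qInt (m + 1)) * Pbasis' (m + 1) := by
  have := qInt_succ_ne_zero m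
  have := qFact_ne_zero m
  have := RatFunc.X_sub_X_inv_ne_zero (K := ℚ)
  have hc : ((δ ^ m * qFact m)⁻¹ : RatFunc ℚ)
      = δ * qInt (m + 1) * (δ ^ (m + 1) * qFact (m + 1))⁻¹ := by
    rw [qFact_succ]
    generalize δ = w at *
    field_simp
    ring
  rw [Pbasis', Pbasis', Pbasis_succ, hc, C_mul]
  ring

lemma X_sub_C_PbasisRoot_mul_Pbasis' (m k : ℕ) :
    (X - C (PbasisRoot m)) * Pbasis' k
      = C (δ * qInt (k + 1)) * Pbasis' (k + 1) + C (PbasisRoot k - PbasisRoot m) * Pbasis' k := by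
  rw [← X_sub_C_PbasisRoot_mul_Pbasis'_self, C_sub]
  ring

/-- The coefficient `(v - v⁻¹)^i [m+n]! / ([m-i]! [n-i]! [i]!)` of `P′_{m+n-i}` in `P′_m P′_n`,
written so that it vanishes unless `i ≤ m` and `i ≤ n`. -/
noncomputable def structConst (m n i : ℕ) : RatFunc ℚ :=
  δ ^ i * qDescFact m i * qChoose n i * qChoose (m + n) n

lemma structConst_mem_ZLaurent (m n i : ℕ) : structConst m n i ∈ ZLaurent :=
  mul_mem (mul_mem (mul_mem (pow_mem X_sub_X_inv_mem_ZLaurent i) (qDescFact_mem_ZLaurent m i))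
    (qChoose_mem_ZLaurent n i)) (qChoose_mem_ZLaurent _ n)

lemma structConst_zero_left (n i : ℕ) : structConst 0 n i = if i = 0 then 1 else 0 := by
  rcases i with _ | i
  · simp [structConst, qDescFact_zero_right, qChoose_zero_right, qChoose_self]
  · simp [structConst, qDescFact_eq_zero_of_lt i.succ_pos]

lemma structConst_eq_zero {m n i : ℕ} (h : m < i ∨ n < i) : structConst m n i = 0 := by
  rcases h with h | h
  · simp [structConst, qDescFact_eq_zero_of_lt h]
  · simp [structConst, qChoose_eq_zero_of_lt h]

lemma structConst_succ_right_mul_qInt (m n i : ℕ) :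
    structConst m n (i + 1) * qInt (i + 1)
      = structConst m n i * δ * qInt (m - i) * qInt (n - i) := by
  rw [structConst, structConst, mul_right_comm, mul_assoc _ (qChoose n (i + 1)),
    qChoose_succ_mul_qInt, qDescFact_succ_right]
  ring

lemma structConst_succ_succ_mul_qInt (m n i : ℕ) :
    structConst (m + 1) n (i + 1) * qInt (i + 1)
      = structConst m n i * δ * qInt (n - i) * qInt (m + n + 1) := by
  apply mul_left_cancel₀ (qInt_succ_ne_zero m)
  have h := qChoose_succ_mul_qInt n i
  have h' := qChoose_add_mul_qInt m n
  rw [structConst, structConst, qDescFact_succ_succ]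
  linear_combination δ ^ (i + 1) * qInt (m + 1) * qDescFact m i *
    (qChoose (m + 1 + n) n * qInt (m + 1) * h + qChoose n i * qInt (n - i) * h')

lemma structConst_succ_zero (m n : ℕ) :
    δ * qInt (m + 1) * structConst (m + 1) n 0 = structConst m n 0 * (δ * qInt (m + n + 1)) := by
  have h := qChoose_add_mul_qInt m n
  simp only [structConst, pow_zero, qDescFact_zero_right, qChoose_zero_right, one_mul]
  linear_combination δ * h

lemma structConst_succ_succ (m n i : ℕ) :
    δ * qInt (m + 1) * structConst (m + 1) n (i + 1)
      = structConst m n (i + 1) * (δ * qInt (m + n - i))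
        + structConst m n i * (PbasisRoot (m + n - i) - PbasisRoot m) := by
  by_cases h : i ≤ m ∧ i ≤ n
  swap
  · rw [structConst_eq_zero (by omega), structConst_eq_zero (by omega),
      structConst_eq_zero (by omega)]
    ring
  obtain ⟨p, rfl⟩ := Nat.exists_eq_add_of_le h.1
  obtain ⟨r, rfl⟩ := Nat.exists_eq_add_of_le h.2
  apply mul_left_cancel₀ (qInt_succ_ne_zero i)
  have h1 := structConst_succ_right_mul_qInt (i + p) (i + r) i
  have h2 := structConst_succ_succ_mul_qInt (i + p) (i + r) i
  have hroot := PbasisRoot_add_sub (i + p) r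
  have key := qInt_mul_qInt (i + 1) p (i + p + r)
  simp only [Nat.add_sub_cancel_left] at h1 h2
  rw [show i + p + (i + r) - i = i + p + r by omega]
  rw [show i + 1 + p + (i + p + r) = 2 * (i + p) + r + 1 by ring,
    show i + 1 + p = i + p + 1 by ring,
    show i + 1 + (i + p + r) = i + p + (i + r) + 1 by ring] at key
  -- multiplied by `[i+1]`, the claim becomes `key` up to the factor `δ² [r] · structConst _ _ i`
  linear_combination δ * qInt (i + p + 1) * h2 - δ * qInt (i + p + r) * h1
    - qInt (i + 1) * structConst (i + p) (i + r) i * hroot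
    + structConst (i + p) (i + r) i * δ ^ 2 * qInt r * key

theorem Pbasis'_mul_Pbasis' (m n : ℕ) :
    Pbasis' m * Pbasis' n = ∑ i ∈ range (n + 1), C (structConst m n i) * Pbasis' (m + n - i) := by
  induction m with
  | zero =>
    rw [Pbasis'_zero, one_mul, sum_range_succ']
    simp [structConst_zero_left]
  | succ m ih =>
    apply mul_left_cancel₀
      (C_ne_zero.2 (mul_ne_zero RatFunc.X_sub_X_inv_ne_zero (qInt_succ_ne_zero m)))
    calc C (δ * qInt (m + 1)) * (Pbasis' (m + 1) * Pbasis' n)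
        = (X - C (PbasisRoot m)) * (Pbasis' m * Pbasis' n) := by
          rw [← mul_assoc, ← X_sub_C_PbasisRoot_mul_Pbasis'_self, mul_assoc]
      _ = ∑ i ∈ range (n + 1),
            (C (structConst m n i * (δ * qInt (m + n - i + 1))) * Pbasis' (m + n - i + 1)
              + C (structConst m n i * (PbasisRoot (m + n - i) - PbasisRoot m))
                * Pbasis' (m + n - i)) := by
          rw [ih, mul_sum]
          refine sum_congr rfl fun i _ => ?_
          rw [mul_left_comm, X_sub_C_PbasisRoot_mul_Pbasis']
          simp only [map_mul]
          ring
      _ = C (δ * qInt (m + 1))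
            * ∑ i ∈ range (n + 1), C (structConst (m + 1) n i) * Pbasis' (m + 1 + n - i) := by
          -- split off the `i = 0` term of the first sum and the (vanishing) `i = n` term of the second
          rw [sum_add_distrib, sum_range_succ', sum_range_succ _ n, mul_sum, sum_range_succ',
            Nat.add_sub_cancel_right, sub_self, mul_zero, map_zero, zero_mul, add_zero,
            add_right_comm, ← sum_add_distrib]
          congr 1
          · refine sum_congr rfl fun i hi => ?_
            have hi : i < n := mem_range.1 hi
            rw [show m + n - (i + 1) + 1 = m + n - i by omega,
              show m + 1 + n - (i + 1) = m + n - i by omega, ← mul_assoc (C _), ← C_mul,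
              structConst_succ_succ, C_add, add_mul]
          · rw [← mul_assoc (C _), ← C_mul, structConst_succ_zero, Nat.sub_zero, Nat.sub_zero,
              add_right_comm m 1 n]

lemma Polynomial.C_coe_mul_eq_smul {R : Type*} [CommRing R] {S : Subring R} (z : S) (f : R[X]) :
    C (z : R) * f = z • f := by
  rw [Subring.smul_def, smul_eq_C_mul]

lemma inSpanP'_univ_iff_mem_span (f : (RatFunc ℚ)[X]) :
    inSpanP' Set.univ f ↔ f ∈ Submodule.span ZLaurent (Set.range Pbasis') := by
  constructor
  · rintro ⟨s, c, -, rfl⟩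
    exact sum_mem fun k _ => C_coe_mul_eq_smul (c k) _ ▸
      Submodule.smul_mem _ _ (Submodule.subset_span (Set.mem_range_self k))
  · intro hf
    obtain ⟨c, rfl⟩ := Finsupp.mem_span_range_iff_exists_finsupp.1 hf
    exact ⟨c.support, c, Set.subset_univ _, by simp [Finsupp.sum, C_coe_mul_eq_smul]⟩

lemma Pbasis'_mul_Pbasis'_mem_span (m n : ℕ) :
    Pbasis' m * Pbasis' n ∈ Submodule.span ZLaurent (Set.range Pbasis') := by
  rw [Pbasis'_mul_Pbasis']
  exact sum_mem fun i _ => C_coe_mul_eq_smul ⟨_, structConst_mem_ZLaurent m n i⟩ _ ▸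
    Submodule.smul_mem _ _ (Submodule.subset_span (Set.mem_range_self _))

lemma span_Pbasis'_mul_le :
    Submodule.span ZLaurent (Set.range Pbasis') * Submodule.span ZLaurent (Set.range Pbasis')
      ≤ Submodule.span ZLaurent (Set.range Pbasis') := by
  rw [Submodule.span_mul_span, Submodule.span_le]
  rintro _ ⟨_, ⟨m, rfl⟩, _, ⟨n, rfl⟩, rfl⟩
  exact Pbasis'_mul_Pbasis'_mem_span m n

noncomputable def PbasisSpan : Subalgebra ZLaurent (RatFunc ℚ)[X] :=
  (Submodule.span ZLaurent (Set.range Pbasis')).toSubalgebra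
    (Pbasis'_zero ▸ Submodule.subset_span (Set.mem_range_self 0))
    fun _ _ hf hg => span_Pbasis'_mul_le (Submodule.mul_mem_mul hf hg)

lemma Pbasis'_mem_Ralg (n : ℕ) : Pbasis' n ∈ Ralg := by
  rcases n.eq_zero_or_pos with rfl | hn
  · exact Pbasis'_zero ▸ one_mem _
  · exact Subring.subset_closure (Or.inr ⟨n, hn, rfl⟩)

lemma Ralg_eq_PbasisSpan : (Ralg : Set (RatFunc ℚ)[X]) = PbasisSpan := by
  apply le_antisymm
  · show Ralg ≤ PbasisSpan.toSubring
    refine Subring.closure_le.2 ?_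
    rintro _ (⟨z, hz, rfl⟩ | ⟨n, -, rfl⟩)
    · exact PbasisSpan.algebraMap_mem ⟨z, hz⟩
    · exact Submodule.subset_span (Set.mem_range_self n)
  · intro f hf
    obtain ⟨s, c, -, rfl⟩ := (inSpanP'_univ_iff_mem_span f).2 hf
    exact sum_mem fun k _ =>
      mul_mem (Subring.subset_closure (Or.inl ⟨_, (c k).2, rfl⟩)) (Pbasis'_mem_Ralg k)

lemma linearIndependent_Pbasis' : LinearIndependent (RatFunc ℚ) Pbasis' :=
  Polynomial.Sequence.linearIndependent ⟨Pbasis', Pbasis'_degree⟩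

/-- The `ℤ[v,v^{−1}]`-span of `{P′_n : n ≥ 0}` in `ℚ(v)[x]` is closed
under multiplication; consequently it equals the `ℤ[v,v^{−1}]`-subalgebra `𝓡` generated
by the `P′_n`, `n ≥ 1`; and the `P′_n` are linearly independent over `ℤ[v,v^{−1}]`, so
`𝓡` is a free `ℤ[v,v^{−1}]`-module with basis `{P′_n : n ≥ 0}`. -/
theorem span_Pprime_is_subalgebra_and_free :
    (∀ m n : ℕ, inSpanP' Set.univ (Pbasis' m * Pbasis' n)) ∧
    {f | inSpanP' Set.univ f} = (Ralg : Set (Polynomial (RatFunc ℚ))) ∧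
    (∀ (s : Finset ℕ) (c : ℕ → ZLaurent),
      ∑ k ∈ s, Polynomial.C ((c k : RatFunc ℚ)) * Pbasis' k = 0 → ∀ k ∈ s, c k = 0) := by
  refine ⟨fun m n => (inSpanP'_univ_iff_mem_span _).2 (Pbasis'_mul_Pbasis'_mem_span m n), ?_, ?_⟩
  · rw [Ralg_eq_PbasisSpan]
    ext f
    exact inSpanP'_univ_iff_mem_span f
  · intro s c hsum
    refine linearIndependent_iff'.1 (linearIndependent_Pbasis'.restrict_scalars' ZLaurent) s c ?_
    simpa only [C_coe_mul_eq_smul] using hsum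
end

section
/- Let R be a commutative ring, m ≥ 1 an integer, and ζ ∈ R an element with ζ^m = 1. Then for every integer n ≥ 0, the element (q − ζ)^{⌊n/m⌋} divides ∏_{i=1}^{n} (q^i − 1) in the polynomial ring R[q]. -/
/-- If `R` is a commutative ring, `m ≥ 1`, and `ζ ∈ R` satisfies
`ζ^m = 1`, then `(q − ζ)^⌊n/m⌋` divides `∏_{i=1}^n (q^i − 1)` in `R[q]`. -/
theorem pow_sub_root_of_unity_dvd_qPochhammer
    (R : Type*) [CommRing R] (m : ℕ) (hm : 1 ≤ m) (ζ : R) (hζ : ζ ^ m = 1) (n : ℕ) :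
    (Polynomial.X - Polynomial.C ζ) ^ (n / m) ∣
      ∏ i ∈ Finset.Icc 1 n, ((Polynomial.X : Polynomial R) ^ i - 1) := by
  classical
  set S : Finset ℕ := (Finset.Icc 1 (n / m)).image (· * m) with hS
  have hinj : Set.InjOn (· * m) (Finset.Icc 1 (n / m)) := by
    intro a _ b _ h
    exact Nat.eq_of_mul_eq_mul_right hm h
  have hcard : S.card = n / m := by
    rw [hS, Finset.card_image_of_injOn hinj, Nat.card_Icc, Nat.add_sub_cancel]
  have hsub : S ⊆ Finset.Icc 1 n := by
    intro x hx
    simp only [hS, Finset.mem_image, Finset.mem_Icc] at hx ⊢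
    obtain ⟨k, ⟨hk1, hk2⟩, rfl⟩ := hx
    constructor
    · exact le_trans hk1 (Nat.le_mul_of_pos_right k hm)
    · calc k * m ≤ n / m * m := Nat.mul_le_mul_right m hk2
        _ ≤ n := Nat.div_mul_le_self n m
  have h1 : (Polynomial.X - Polynomial.C ζ) ^ (n / m)
      ∣ ∏ i ∈ S, ((Polynomial.X : Polynomial R) ^ i - 1) := by
    rw [← hcard, ← Finset.prod_const]
    refine Finset.prod_dvd_prod_of_dvd _ _ ?_
    intro i hi
    simp only [hS, Finset.mem_image, Finset.mem_Icc] at hi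
    obtain ⟨k, _, rfl⟩ := hi
    rw [Polynomial.dvd_iff_isRoot]
    simp [Polynomial.IsRoot, mul_comm k m, pow_mul, hζ]
  refine h1.trans (Finset.prod_dvd_prod_of_subset _ _ _ hsub)
end
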